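/- Let L₁ and L₂ be principal 𝕋-bundles and let T : C₀^𝕋(L₁) → C₀^𝕋(L₂) be a (not necessarily continuous) linear orthogonality preserving map. Then there exist finitely many points t₁, …, t_m ∈ L̂₁ such that the union ⋃_{s ∈ L₂^d} supp(δ_s∘T) equals the disjoint union 𝕋t₁ ∪ … ∪ 𝕋t_m; equivalently, the set { q₁(t) : t ∈ supp(δ_s∘T) for some s ∈ L₂^d } ⊆ L̂₁/𝕋 is finite. -/

import Mathlib

open scoped ZeroAtInfty

noncomputable section

/-- A principal `𝕋`-bundle: a `𝕋`-symmetric subset `L` of an ambient complex topological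
vector space not containing `0` such that `L ∪ {0}` is compact. -/
structure TBundle (E : Type*) [AddCommGroup E] [Module ℂ E] [TopologicalSpace E] where
  carrier : Set E
  smul_mem : ∀ z : ℂ, ‖z‖ = 1 → ∀ t ∈ carrier, z • t ∈ carrier
  zero_not_mem : (0 : E) ∉ carrier
  isCompact_union : IsCompact (carrier ∪ {0})

variable {E F : Type*} [AddCommGroup E] [Module ℂ E] [TopologicalSpace E]
  [AddCommGroup F] [Module ℂ F] [TopologicalSpace F]

/-- `L̂ = L ∪ {0}`. -/
def TBundle.hat (L : TBundle E) : Set E := L.carrier ∪ {0}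

/-- A subset `S` is `𝕋`-symmetric if `𝕋S = S`. -/
def TSymm (S : Set E) : Prop := ∀ z : ℂ, ‖z‖ = 1 → ∀ x ∈ S, z • x ∈ S

/-- Rotation of a point of `L` by a unimodular scalar. -/
def TBundle.sm (L : TBundle E) (z : ℂ) (hz : ‖z‖ = 1) (t : L.carrier) : L.carrier :=
  ⟨z • (t : E), L.smul_mem z hz t t.2⟩

theorem TBundle.hat_smul_mem (L : TBundle E) (z : ℂ) (hz : ‖z‖ = 1) {x : E}
    (hx : x ∈ L.hat) : z • x ∈ L.hat := by
  rcases hx with hx | hx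
  · exact Or.inl (L.smul_mem z hz x hx)
  · simp only [Set.mem_singleton_iff] at hx
    subst hx
    right; simp

/-- Rotation of a point of `L̂` by a unimodular scalar. -/
def TBundle.hsm (L : TBundle E) (z : ℂ) (hz : ‖z‖ = 1) (t : L.hat) : L.hat :=
  ⟨z • (t : E), L.hat_smul_mem z hz t.2⟩

/-- The commutative JB*-triple `C₀^𝕋(L)` of `𝕋`-equivariant elements of `C₀(L, ℂ)`,
as a (closed) submodule of `C₀(L, ℂ)`. -/
def TBundle.C0T (L : TBundle E) : Submodule ℂ C₀(↥L.carrier, ℂ) where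
  carrier := {a | ∀ (z : ℂ) (hz : ‖z‖ = 1) (t : L.carrier), a (L.sm z hz t) = z * a t}
  add_mem' := by
    intro a b ha hb z hz t
    simp [ha z hz t, hb z hz t, mul_add]
  zero_mem' := by intro z hz t; simp
  smul_mem' := by
    intro c a ha z hz t
    simp [ha z hz t]
    ring

/-- `T` preserves orthogonality: functions with zero pointwise product are mapped to
functions with zero pointwise product. -/
def OrthogonalityPreserving (L₁ : TBundle E) (L₂ : TBundle F)
    (T : L₁.C0T →ₗ[ℂ] L₂.C0T) : Prop :=
  ∀ a b : L₁.C0T, (∀ t : L₁.carrier, a.1 t * b.1 t = 0) →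
    ∀ s : L₂.carrier, (T a).1 s * (T b).1 s = 0

/-- The support of the functional `δ_s ∘ T`: all `t ∈ L̂₁` such that every `𝕋`-symmetric
relatively open neighbourhood `U` of `t` in `L̂₁` contains the cozero set of some
`a ∈ C₀^𝕋(L₁)` with `T(a)(s) ≠ 0`. -/
def suppDelta {L₁ : TBundle E} {L₂ : TBundle F} (T : L₁.C0T →ₗ[ℂ] L₂.C0T)
    (s : L₂.carrier) : Set E :=
  {t | t ∈ L₁.hat ∧ ∀ U : Set E, t ∈ U → TSymm U →
      (∃ V : Set E, IsOpen V ∧ U = V ∩ L₁.hat) →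
      ∃ a : L₁.C0T, (∀ x : L₁.carrier, (x : E) ∉ U → a.1 x = 0) ∧ (T a).1 s ≠ 0}

/-- The set `L₂^z` of points where `δ_s ∘ T` vanishes. -/
def Lzero {L₁ : TBundle E} {L₂ : TBundle F} (T : L₁.C0T →ₗ[ℂ] L₂.C0T) :
    Set L₂.carrier :=
  {s | ∀ a : L₁.C0T, (T a).1 s = 0}

/-- The set `L₂^d` of points where `δ_s ∘ T` is discontinuous (w.r.t. the sup norm). -/
def Ldisc {L₁ : TBundle E} {L₂ : TBundle F} (T : L₁.C0T →ₗ[ℂ] L₂.C0T) :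
    Set L₂.carrier :=
  {s | ¬ Continuous fun a : L₁.C0T => (T a).1 s}

/-- The set `L₂^{nz}` of points where `δ_s ∘ T` is nonzero. -/
def Lnz {L₁ : TBundle E} {L₂ : TBundle F} (T : L₁.C0T →ₗ[ℂ] L₂.C0T) :
    Set L₂.carrier :=
  {s | ∃ a : L₁.C0T, (T a).1 s ≠ 0}

/-- The set `L₂^c` of points where `δ_s ∘ T` is nonzero and norm-continuous. -/
def Lcont {L₁ : TBundle E} {L₂ : TBundle F} (T : L₁.C0T →ₗ[ℂ] L₂.C0T) :
    Set L₂.carrier :=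
  {s | (∃ a : L₁.C0T, (T a).1 s ≠ 0) ∧ Continuous fun a : L₁.C0T => (T a).1 s}

/-- The `𝕋`-orbit of a point. -/
def Torbit (t : E) : Set E := {x | ∃ z : ℂ, ‖z‖ = 1 ∧ x = z • t}

/-- The equivalence relation on `L̂` identifying points of the same `𝕋`-orbit. -/
def TBundle.orbitSetoid (L : TBundle E) : Setoid ↥L.hat where
  r t₁ t₂ := ∃ z : ℂ, ‖z‖ = 1 ∧ (t₂ : E) = z • (t₁ : E)
  iseqv := by
    constructor
    · intro t; exact ⟨1, by simp, by simp⟩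
    · rintro t₁ t₂ ⟨z, hz, h⟩
      have hz0 : z ≠ 0 := by intro h0; rw [h0] at hz; simp at hz
      refine ⟨z⁻¹, by simp [hz], ?_⟩
      rw [h, smul_smul, inv_mul_cancel₀ hz0, one_smul]
    · rintro t₁ t₂ t₃ ⟨z, hz, h⟩ ⟨w, hw, h'⟩
      exact ⟨w * z, by simp [hz, hw], by rw [h', h, smul_smul]⟩

/-- The cozero set of an element of `C₀^𝕋(L)`, as a subset of the ambient space. -/
def coz {L : TBundle E} (a : L.C0T) : Set E := (↑) '' {t : L.carrier | a.1 t ≠ 0}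

/-!
For `s ∈ L₂^d` the functional `δ_s ∘ T` is unbounded near some orbit of `L̂₁/𝕋`: otherwise a
partition of unity on the compact Hausdorff space `L̂₁/𝕋`, pulled back to `𝕋`-invariant
functions on `L₁`, would bound it. Such an orbit lies in `supp(δ_s ∘ T)`, and by orthogonality
the support contains no two different orbits, so it is exactly that orbit. If infinitely many
orbits arose in this way, functions `aₙ` of norm `≤ 2⁻ⁿ` supported over pairwise disjoint
neighbourhoods of them, with `|T(aₙ)(sₙ)| > n`, would sum to some `A` with
`T(A)(sₙ) = T(aₙ)(sₙ)` by orthogonality, so `T(A)` could not be bounded.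
-/

set_option linter.unusedSectionVars false

open Filter Function Set Topology
open scoped BoundedContinuousFunction

namespace ZeroAtInftyContinuousMap

variable {α 𝕜 : Type*} [TopologicalSpace α] [NormedField 𝕜]

lemma norm_apply_le (f : C₀(α, 𝕜)) (x : α) : ‖f x‖ ≤ ‖f‖ := by
  rw [← norm_toBCF_eq_norm]
  exact f.toBCF.norm_coe_le_norm x

def evalCLM (x : α) : C₀(α, 𝕜) →L[𝕜] 𝕜 :=
  LinearMap.mkContinuous ⟨⟨fun f => f x, fun _ _ => rfl⟩, fun _ _ => rfl⟩ 1
    fun f => by simpa using norm_apply_le f x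

@[simp] lemma evalCLM_apply (x : α) (f : C₀(α, 𝕜)) : evalCLM x f = f x := rfl

lemma sum_apply {ι : Type*} (s : Finset ι) (f : ι → C₀(α, 𝕜)) (x : α) :
    (∑ i ∈ s, f i) x = ∑ i ∈ s, f i x :=
  map_sum (evalCLM x) f s

lemma tsum_apply_of_pairwise_disjoint_support {u : ℕ → C₀(α, 𝕜)} (hu : Summable u)
    (hd : Pairwise (Disjoint on fun n => Function.support (u n))) {j : ℕ} {x : α}
    (hx : u j x ≠ 0) : (∑' n, u n) x = u j x := by
  rw [← evalCLM_apply, (evalCLM x).map_tsum hu]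
  refine tsum_eq_single j fun n hn => ?_
  by_contra hn'
  exact Set.disjoint_left.1 (hd hn) hn' hx

def mulBCF (g : α →ᵇ 𝕜) (f : C₀(α, 𝕜)) : C₀(α, 𝕜) where
  toFun x := g x * f x
  continuous_toFun := g.continuous.mul f.continuous
  zero_at_infty' := by
    refine isBoundedUnder_le_mul_tendsto_zero ?_ (zero_at_infty f)
    exact isBoundedUnder_of ⟨‖g‖, g.norm_coe_le_norm⟩

@[simp] lemma mulBCF_apply (g : α →ᵇ 𝕜) (f : C₀(α, 𝕜)) (x : α) :
    mulBCF g f x = g x * f x := rfl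

lemma norm_mulBCF_le (g : α →ᵇ 𝕜) (f : C₀(α, 𝕜)) : ‖mulBCF g f‖ ≤ ‖g‖ * ‖f‖ := by
  rw [← norm_toBCF_eq_norm, BoundedContinuousFunction.norm_le (by positivity)]
  intro x
  calc ‖g x * f x‖ = ‖g x‖ * ‖f x‖ := norm_mul _ _
    _ ≤ ‖g‖ * ‖f‖ := mul_le_mul (g.norm_coe_le_norm x) (norm_apply_le f x)
        (norm_nonneg _) (norm_nonneg _)

end ZeroAtInftyContinuousMap

lemma AccPt.exists_pairwise_disjoint_isOpen_inter_nonempty {X : Type*} [TopologicalSpace X]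
    [T2Space X] {S : Set X} {x : X} (hx : AccPt x (𝓟 S)) :
    ∃ U : ℕ → Set X, (∀ n, IsOpen (U n)) ∧ (∀ n, (U n ∩ S).Nonempty) ∧
      Pairwise (Disjoint on U) := by
  have : Std.Symm (α := Set X) Disjoint := ⟨fun _ _ h ↦ h.symm⟩
  -- each new set also avoids a neighbourhood of `x`, so that `x` is still an accumulation point
  -- of what is left of `S`
  obtain ⟨U, hU, hd⟩ := exists_seq_of_forall_finset_exists'
    (fun U : Set X ↦ (U ∩ S).Nonempty ∧ IsOpen U ∧ Uᶜ ∈ 𝓝 x) Disjoint fun F hF ↦ by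
      have hN : ⋂ U ∈ F, interior Uᶜ ∈ 𝓝 x :=
        (biInter_finset_mem _).2 fun U hU ↦ interior_mem_nhds.2 (hF U hU).2.2
      obtain ⟨y, ⟨hyN, hyS⟩, hyx⟩ := accPt_iff_nhds.1 hx _ hN
      obtain ⟨V, W, hVo, hWo, hyV, hxW, hVW⟩ := t2_separation hyx
      refine ⟨V ∩ ⋂ U ∈ F, interior Uᶜ, ⟨⟨y, ⟨hyV, hyN⟩, hyS⟩,
        hVo.inter (isOpen_biInter_finset fun _ _ ↦ isOpen_interior), ?_⟩, fun U hU ↦ ?_⟩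
      · exact mem_of_superset (hWo.mem_nhds hxW) fun z hzW hz ↦
          Set.disjoint_left.1 hVW hz.1 hzW
      · exact Set.disjoint_left.2 fun z hzU hz ↦
          interior_subset (mem_iInter₂.1 hz.2 U hU) hzU
  exact ⟨U, fun n ↦ (hU n).2.1, fun n ↦ (hU n).1, hd⟩

section Orbits

lemma TSymm.inter {U V : Set E} (hU : TSymm U) (hV : TSymm V) : TSymm (U ∩ V) :=
  fun z hz x hx => ⟨hU z hz x hx.1, hV z hz x hx.2⟩

lemma TBundle.tsymm_hat (L : TBundle E) : TSymm L.hat := fun z hz _ hx => L.hat_smul_mem z hz hx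

def symCore (V : Set E) : Set E := {x | ∀ z : ℂ, ‖z‖ = 1 → z • x ∈ V}

lemma symCore_subset (V : Set E) : symCore V ⊆ V := fun x hx => by
  simpa using hx 1 (by simp)

lemma tsymm_symCore (V : Set E) : TSymm (symCore V) := fun z hz x hx w hw => by
  rw [smul_smul]
  exact hx (w * z) (by simp [hz, hw])

lemma disjoint_Torbit_of_notMem {t₁ t₂ : E} (h : t₂ ∉ Torbit t₁) :
    Disjoint (Torbit t₁) (Torbit t₂) := by
  refine Set.disjoint_left.2 ?_
  rintro _ ⟨z₁, hz₁, rfl⟩ ⟨z₂, hz₂, he⟩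
  have hz₂0 : z₂ ≠ 0 := norm_ne_zero_iff.1 (by simp [hz₂])
  exact h ⟨z₂⁻¹ * z₁, by simp [hz₁, hz₂], by rw [mul_smul, he, inv_smul_smul₀ hz₂0]⟩

lemma Torbit_eq_image_sphere (t : E) : Torbit t = (· • t) '' Metric.sphere (0 : ℂ) 1 := by
  ext x
  simp [Torbit, eq_comm]

variable [ContinuousSMul ℂ E]

lemma isCompact_Torbit (t : E) : IsCompact (Torbit t) := by
  rw [Torbit_eq_image_sphere]
  exact (isCompact_sphere 0 1).image (continuous_id.smul continuous_const)

lemma isOpen_symCore {V : Set E} (hV : IsOpen V) : IsOpen (symCore V) := by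
  refine isOpen_iff_mem_nhds.2 fun x₀ hx₀ => ?_
  have := (isCompact_sphere (0 : ℂ) 1).eventually_forall_of_forall_eventually
    (P := fun x z => z • x ∈ V) fun z hz =>
      (continuous_snd.smul continuous_fst).continuousAt.preimage_mem_nhds
        (hV.mem_nhds (hx₀ z (by simpa using hz)))
  exact this.mono fun x hx z hz => hx z (by simpa using hz)

variable [T2Space E]

lemma exists_tsymm_isOpen_separation {t₁ t₂ : E} (h : t₂ ∉ Torbit t₁) :
    ∃ V₁ V₂ : Set E, IsOpen V₁ ∧ IsOpen V₂ ∧ TSymm V₁ ∧ TSymm V₂ ∧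
      t₁ ∈ V₁ ∧ t₂ ∈ V₂ ∧ Disjoint V₁ V₂ := by
  obtain ⟨U₁, U₂, hU₁, hU₂, hsub₁, hsub₂, hd⟩ := SeparatedNhds.of_isCompact_isCompact
    (isCompact_Torbit t₁) (isCompact_Torbit t₂) (disjoint_Torbit_of_notMem h)
  exact ⟨symCore U₁, symCore U₂, isOpen_symCore hU₁, isOpen_symCore hU₂, tsymm_symCore _,
    tsymm_symCore _, fun z hz => hsub₁ ⟨z, hz, rfl⟩, fun z hz => hsub₂ ⟨z, hz, rfl⟩,
    hd.mono (symCore_subset U₁) (symCore_subset U₂)⟩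

end Orbits

namespace TBundle

variable (L : TBundle E)

/-- The orbit space `L̂/𝕋`. -/
abbrev OrbitSpace : Type _ := Quotient L.orbitSetoid

def orbitMap (x : L.carrier) : L.OrbitSpace := Quotient.mk _ ⟨x, Or.inl x.2⟩

def orbitsIn (U : Set E) : Set L.OrbitSpace := Quotient.mk _ '' ((↑) ⁻¹' U)

instance : CompactSpace L.hat := isCompact_iff_compactSpace.1 L.isCompact_union

variable {L}

lemma mk_eq_mk_iff {x y : L.hat} :
    Quotient.mk L.orbitSetoid x = Quotient.mk _ y ↔ (y : E) ∈ Torbit (x : E) :=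
  Quotient.eq

lemma Torbit_eq_image (t : L.hat) :
    Torbit (t : E) = (↑) '' (Quotient.mk L.orbitSetoid ⁻¹' {Quotient.mk _ t}) := by
  ext x
  refine ⟨fun hx => ?_, ?_⟩
  · obtain ⟨z, hz, rfl⟩ := hx
    exact ⟨⟨_, L.hat_smul_mem z hz t.2⟩, (mk_eq_mk_iff.2 ⟨z, hz, rfl⟩).symm, rfl⟩
  · rintro ⟨y, hy, rfl⟩
    exact mk_eq_mk_iff.1 hy.symm

lemma continuous_orbitMap : Continuous L.orbitMap :=
  continuous_quotient_mk'.comp (continuous_inclusion subset_union_left)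

lemma orbitMap_sm (z : ℂ) (hz : ‖z‖ = 1) (x : L.carrier) :
    L.orbitMap (L.sm z hz x) = L.orbitMap x :=
  (mk_eq_mk_iff.2 ⟨z, hz, rfl⟩).symm

lemma mk_mem_orbitsIn {U : Set E} (hU : TSymm U) {x : L.hat} :
    Quotient.mk _ x ∈ L.orbitsIn U ↔ (x : E) ∈ U := by
  refine ⟨?_, fun hx => ⟨x, hx, rfl⟩⟩
  rintro ⟨y, hy, hyx⟩
  obtain ⟨z, hz, hxz⟩ := mk_eq_mk_iff.1 hyx
  exact hxz ▸ hU z hz _ hy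

lemma isOpen_orbitsIn {U : Set E} (hU : TSymm U) (hUo : IsOpen ((↑) ⁻¹' U : Set L.hat)) :
    IsOpen (L.orbitsIn U) := by
  rw [← isQuotientMap_quotient_mk'.isOpen_preimage]
  convert hUo using 1
  ext x
  exact mk_mem_orbitsIn hU

lemma isClosed_C0T : IsClosed (L.C0T : Set C₀(L.carrier, ℂ)) := by
  have : (L.C0T : Set C₀(L.carrier, ℂ)) = ⋂ (z : ℂ) (hz : ‖z‖ = 1) (t : L.carrier),
      {a | ZeroAtInftyContinuousMap.evalCLM (L.sm z hz t) a =
        z * ZeroAtInftyContinuousMap.evalCLM t a} := by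
    ext a
    simp only [Set.mem_iInter]
    rfl
  rw [this]
  exact isClosed_iInter fun z => isClosed_iInter fun hz => isClosed_iInter fun t =>
    isClosed_eq (ZeroAtInftyContinuousMap.evalCLM _).continuous
      (continuous_const.mul (ZeroAtInftyContinuousMap.evalCLM _).continuous)

def mulOrbitFun (g : C(L.OrbitSpace, ℝ)) (hg : ∀ q, ‖g q‖ ≤ 1) (a : L.C0T) : L.C0T :=
  ⟨ZeroAtInftyContinuousMap.mulBCF
      (BoundedContinuousFunction.ofNormedAddCommGroup (fun x => (g (L.orbitMap x) : ℂ))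
        (Complex.continuous_ofReal.comp (g.continuous.comp continuous_orbitMap)) 1
        fun x => by simpa using hg (L.orbitMap x)) a.1,
    fun z hz t => by
      simp only [ZeroAtInftyContinuousMap.mulBCF_apply,
        BoundedContinuousFunction.coe_ofNormedAddCommGroup, orbitMap_sm, a.2 z hz t]
      ring⟩

lemma mulOrbitFun_apply (g : C(L.OrbitSpace, ℝ)) (hg : ∀ q, ‖g q‖ ≤ 1) (a : L.C0T)
    (x : L.carrier) : (mulOrbitFun g hg a).1 x = g (L.orbitMap x) * a.1 x := rfl

lemma norm_mulOrbitFun_le (g : C(L.OrbitSpace, ℝ)) (hg : ∀ q, ‖g q‖ ≤ 1) (a : L.C0T) :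
    ‖(mulOrbitFun g hg a).1‖ ≤ ‖a.1‖ :=
  calc ‖(mulOrbitFun g hg a).1‖ ≤ 1 * ‖a.1‖ :=
        (ZeroAtInftyContinuousMap.norm_mulBCF_le _ _).trans <| mul_le_mul_of_nonneg_right
          (BoundedContinuousFunction.norm_ofNormedAddCommGroup_le _ zero_le_one _) (norm_nonneg _)
    _ = ‖a.1‖ := one_mul _

lemma support_mulOrbitFun_subset (g : C(L.OrbitSpace, ℝ)) (hg : ∀ q, ‖g q‖ ≤ 1) (a : L.C0T) :
    support (mulOrbitFun g hg a).1 ⊆ L.orbitMap ⁻¹' support g := fun x hx h0 =>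
  hx (by simp [mulOrbitFun_apply, show g (L.orbitMap x) = 0 from h0])

lemma exists_iUnion_Torbit_eq_of_finite {P : Set L.OrbitSpace} (hP : P.Finite) :
    ∃ (m : ℕ) (t : Fin m → E), (∀ i, t i ∈ L.hat) ∧
      (∀ i j, i ≠ j → Disjoint (Torbit (t i)) (Torbit (t j))) ∧
      (↑) '' (Quotient.mk L.orbitSetoid ⁻¹' P) = ⋃ i, Torbit (t i) := by
  have := hP.to_subtype
  obtain ⟨m, ⟨e⟩⟩ := Finite.exists_equiv_fin P
  have horb : ∀ i, Torbit ((e.symm i : L.OrbitSpace).out : E) =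
      (↑) '' (Quotient.mk L.orbitSetoid ⁻¹' {(e.symm i : L.OrbitSpace)}) := fun i => by
    rw [Torbit_eq_image, Quotient.out_eq]
  refine ⟨m, fun i => (e.symm i : L.OrbitSpace).out, fun i => Subtype.prop _,
    fun i j hij => ?_, ?_⟩
  · rw [horb, horb, disjoint_image_iff Subtype.val_injective]
    exact (disjoint_singleton.2 (Subtype.val_injective.ne (e.symm.injective.ne hij))).preimage _
  · simp_rw [horb, ← image_iUnion, ← preimage_iUnion]
    congr
    ext q
    simp only [mem_iUnion, mem_singleton_iff]
    exact ⟨fun hq => ⟨e ⟨q, hq⟩, by simp⟩, fun ⟨i, hi⟩ => hi ▸ (e.symm i).2⟩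

variable [ContinuousSMul ℂ E] [T2Space E]

instance : T2Space L.OrbitSpace := by
  refine ⟨fun q₁ q₂ hne => ?_⟩
  induction q₁ using Quotient.inductionOn with | h x₁ => ?_
  induction q₂ using Quotient.inductionOn with | h x₂ => ?_
  obtain ⟨V₁, V₂, hV₁, hV₂, hs₁, hs₂, hx₁, hx₂, hd⟩ :=
    exists_tsymm_isOpen_separation fun h => hne (mk_eq_mk_iff.2 h)
  refine ⟨L.orbitsIn V₁, L.orbitsIn V₂, isOpen_orbitsIn hs₁ (hV₁.preimage continuous_subtype_val),
    isOpen_orbitsIn hs₂ (hV₂.preimage continuous_subtype_val), (mk_mem_orbitsIn hs₁).2 hx₁,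
    (mk_mem_orbitsIn hs₂).2 hx₂, Set.disjoint_left.2 fun q h₁ h₂ => ?_⟩
  induction q using Quotient.inductionOn with | h y => ?_
  exact Set.disjoint_left.1 hd ((mk_mem_orbitsIn hs₁).1 h₁) ((mk_mem_orbitsIn hs₂).1 h₂)

end TBundle

section Functionals

variable {L₁ : TBundle E} {L₂ : TBundle F} (T : L₁.C0T →ₗ[ℂ] L₂.C0T)

/-- The functional `δ_s ∘ T`. -/
def deltaComp (s : L₂.carrier) : L₁.C0T →ₗ[ℂ] ℂ :=
  (ZeroAtInftyContinuousMap.evalCLM s).toLinearMap ∘ₗ L₂.C0T.subtype ∘ₗ T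

@[simp] lemma deltaComp_apply (s : L₂.carrier) (a : L₁.C0T) : deltaComp T s a = (T a).1 s := rfl

def BoundedOver (s : L₂.carrier) (U : Set L₁.OrbitSpace) : Prop :=
  ∃ C, 0 ≤ C ∧ ∀ a : L₁.C0T, support a.1 ⊆ L₁.orbitMap ⁻¹' U → ‖(T a).1 s‖ ≤ C * ‖a.1‖

def unboundedLocus (s : L₂.carrier) : Set L₁.OrbitSpace :=
  {q | ∀ U ∈ 𝓝 q, ¬ BoundedOver T s U}

variable {T} {s : L₂.carrier}

lemma BoundedOver.mono {U V : Set L₁.OrbitSpace} (h : BoundedOver T s V) (hUV : U ⊆ V) :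
    BoundedOver T s U :=
  let ⟨C, hC, hb⟩ := h
  ⟨C, hC, fun a ha => hb a (ha.trans (preimage_mono hUV))⟩

lemma continuous_of_boundedOver_univ (h : BoundedOver T s univ) :
    Continuous fun a : L₁.C0T => (T a).1 s :=
  let ⟨C, _, hb⟩ := h
  AddMonoidHomClass.continuous_of_bound (deltaComp T s) C fun a => hb a (subset_univ _)

lemma exists_norm_le_lt_of_not_boundedOver {U : Set L₁.OrbitSpace} (h : ¬ BoundedOver T s U)
    {ε : ℝ} (hε : 0 < ε) (M : ℝ) :
    ∃ a : L₁.C0T, support a.1 ⊆ L₁.orbitMap ⁻¹' U ∧ ‖a.1‖ ≤ ε ∧ M < ‖(T a).1 s‖ := by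
  simp only [BoundedOver, not_exists, not_and, not_forall, not_le] at h
  obtain ⟨a, ha, hlt⟩ := h (max M 0 / ε) (by positivity)
  have ha0 : 0 < ‖a.1‖ := by
    refine (norm_nonneg _).lt_of_ne fun h0 => ?_
    have h1 : a = 0 := Subtype.ext (norm_eq_zero.1 h0.symm)
    have h2 : deltaComp T s a = 0 := by rw [h1, map_zero (deltaComp T s)]
    rw [deltaComp_apply] at h2
    rw [h2, ← h0, norm_zero, mul_zero] at hlt
    exact hlt.false
  set c : ℝ := ε / ‖a.1‖
  have hc : 0 < c := div_pos hε ha0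
  refine ⟨(c : ℂ) • a, fun x hx => ha fun h0 => hx ?_, ?_, ?_⟩
  · change (c : ℂ) * a.1 x = 0
    rw [h0, mul_zero]
  · change ‖(c : ℂ) • a.1‖ ≤ ε
    rw [norm_smul, Complex.norm_real, Real.norm_of_nonneg hc.le, div_mul_cancel₀ _ ha0.ne']
  · have happ : (T ((c : ℂ) • a)).1 s = c * (T a).1 s := by rw [map_smul]; rfl
    rw [happ, norm_mul, Complex.norm_real, Real.norm_of_nonneg hc.le]
    calc M ≤ max M 0 := le_max_left _ _
      _ = c * (max M 0 / ε * ‖a.1‖) := by simp only [c]; field_simp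
      _ < c * ‖(T a).1 s‖ := mul_lt_mul_of_pos_left hlt hc

lemma OrthogonalityPreserving.apply_eq_of_eqOn_support (hT : OrthogonalityPreserving L₁ L₂ T)
    {a b : L₁.C0T} (hab : ∀ x, b.1 x ≠ 0 → a.1 x = b.1 x) (hs : (T b).1 s ≠ 0) :
    (T a).1 s = (T b).1 s := by
  have h : deltaComp T s (a - b) * deltaComp T s b = 0 := hT (a - b) b (fun x => by
    by_cases hx : b.1 x = 0
    · rw [hx, mul_zero]
    · exact mul_eq_zero_of_left (sub_eq_zero.2 (hab x hx)) _) s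
  rw [map_sub (deltaComp T s)] at h
  exact sub_eq_zero.1 ((mul_eq_zero.1 h).resolve_right hs)

lemma mem_suppDelta_of_mem_unboundedLocus {t : L₁.hat}
    (ht : Quotient.mk _ t ∈ unboundedLocus T s) : (t : E) ∈ suppDelta T s := by
  refine ⟨t.2, fun U htU hU ⟨V, hV, hUV⟩ => ?_⟩
  have hUo : IsOpen ((↑) ⁻¹' U : Set L₁.hat) := by
    subst hUV
    simpa using hV.preimage continuous_subtype_val
  obtain ⟨a, ha, -, hlt⟩ := exists_norm_le_lt_of_not_boundedOver
    (ht _ ((TBundle.isOpen_orbitsIn hU hUo).mem_nhds ((TBundle.mk_mem_orbitsIn hU).2 htU)))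
    one_pos 0
  exact ⟨a, fun x hx => by_contra fun h => hx ((TBundle.mk_mem_orbitsIn hU).1 (ha h)),
    norm_pos_iff.1 hlt⟩

variable [ContinuousSMul ℂ E] [T2Space E]

lemma boundedOver_univ_of_isOpen_cover {ι : Type*} [Fintype ι] (U : ι → Set L₁.OrbitSpace)
    (hUo : ∀ i, IsOpen (U i)) (hcov : univ ⊆ ⋃ i, U i) (hb : ∀ i, BoundedOver T s (U i)) :
    BoundedOver T s univ := by
  obtain ⟨f, hf⟩ := PartitionOfUnity.exists_isSubordinate isClosed_univ U hUo hcov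
  have hf1 : ∀ i q, ‖f i q‖ ≤ 1 := fun i q => by
    rw [Real.norm_of_nonneg (f.nonneg i q)]
    exact f.le_one i q
  set piece : ι → L₁.C0T → L₁.C0T := fun i => TBundle.mulOrbitFun (f i) (hf1 i)
  choose C hC0 hC using hb
  refine ⟨∑ i, C i, Finset.sum_nonneg fun i _ => hC0 i, fun a _ => ?_⟩
  have hsum : ∑ i, piece i a = a := by
    refine Subtype.ext (ZeroAtInftyContinuousMap.ext fun x => ?_)
    have h1 : ∑ i, f i (L₁.orbitMap x) = 1 := by
      rw [← finsum_eq_sum_of_fintype]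
      exact f.sum_eq_one (mem_univ _)
    simp only [piece, Submodule.coe_sum, ZeroAtInftyContinuousMap.sum_apply,
      TBundle.mulOrbitFun_apply, ← Finset.sum_mul, ← Complex.ofReal_sum, h1, Complex.ofReal_one,
      one_mul]
  calc ‖(T a).1 s‖ = ‖∑ i, deltaComp T s (piece i a)‖ := by rw [← map_sum, hsum, deltaComp_apply]
    _ ≤ ∑ i, ‖deltaComp T s (piece i a)‖ := norm_sum_le _ _
    _ ≤ ∑ i, C i * ‖a.1‖ := Finset.sum_le_sum fun i _ =>
        (hC i _ ((TBundle.support_mulOrbitFun_subset _ _ _).trans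
          (preimage_mono ((subset_tsupport _).trans (hf i))))).trans
        (mul_le_mul_of_nonneg_left (TBundle.norm_mulOrbitFun_le _ _ _) (hC0 i))
    _ = (∑ i, C i) * ‖a.1‖ := (Finset.sum_mul _ _ _).symm

lemma boundedOver_univ_of_forall_nhds (h : ∀ q, ∃ U ∈ 𝓝 q, BoundedOver T s U) :
    BoundedOver T s univ := by
  choose U hU hb using h
  obtain ⟨t, -, ht⟩ := isCompact_univ.elim_nhds_subcover (fun q => interior (U q))
    fun q _ => interior_mem_nhds.2 (hU q)
  refine boundedOver_univ_of_isOpen_cover (fun i : t => interior (U i))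
    (fun _ => isOpen_interior) ?_ fun i => (hb i).mono interior_subset
  rwa [iUnion_subtype]

lemma unboundedLocus_nonempty (hs : s ∈ Ldisc T) : (unboundedLocus T s).Nonempty := by
  by_contra h
  refine hs (continuous_of_boundedOver_univ (boundedOver_univ_of_forall_nhds fun q => ?_))
  simpa [unboundedLocus] using
    Set.eq_empty_iff_forall_notMem.1 (Set.not_nonempty_iff_eq_empty.1 h) q

end Functionals

section Finiteness

variable [ContinuousSMul ℂ E] [T2Space E] {L₁ : TBundle E} {L₂ : TBundle F}
  {T : L₁.C0T →ₗ[ℂ] L₂.C0T}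

theorem OrthogonalityPreserving.finite_iUnion_unboundedLocus
    (hT : OrthogonalityPreserving L₁ L₂ T) : (⋃ s, unboundedLocus T s).Finite := by
  by_contra hinf
  obtain ⟨q, hq⟩ := Set.Infinite.exists_accPt_principal hinf
  obtain ⟨U, hUo, hUne, hUd⟩ := hq.exists_pairwise_disjoint_isOpen_inter_nonempty
  choose y hyU hy using hUne
  choose s hs using fun n => mem_iUnion.1 (hy n)
  choose a ha_supp ha_norm ha_val using fun n : ℕ =>
    exists_norm_le_lt_of_not_boundedOver (hs n (U n) ((hUo n).mem_nhds (hyU n)))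
      (pow_pos one_half_pos n) n
  have hsum : Summable fun n => (a n).1 := Summable.of_norm_bounded summable_geometric_two ha_norm
  have hdisj : Pairwise (Disjoint on fun n => support (a n).1) := fun m n hmn =>
    ((hUd hmn).preimage _).mono (ha_supp m) (ha_supp n)
  let A : L₁.C0T := ⟨∑' n, (a n).1, tsum_mem TBundle.isClosed_C0T fun n => (a n).2⟩
  have hA : ∀ n, (T A).1 (s n) = (T (a n)).1 (s n) := fun n =>
    hT.apply_eq_of_eqOn_support
      (fun x hx => ZeroAtInftyContinuousMap.tsum_apply_of_pairwise_disjoint_support hsum hdisj hx)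
      (norm_pos_iff.1 ((Nat.cast_nonneg n).trans_lt (ha_val n)))
  obtain ⟨n, hn⟩ := exists_nat_gt ‖(T A).1‖
  have := ZeroAtInftyContinuousMap.norm_apply_le (T A).1 (s n)
  rw [hA n] at this
  linarith [ha_val n]

lemma OrthogonalityPreserving.mem_Torbit_of_mem_suppDelta (hT : OrthogonalityPreserving L₁ L₂ T)
    {s : L₂.carrier} {t₁ t₂ : E} (h₁ : t₁ ∈ suppDelta T s) (h₂ : t₂ ∈ suppDelta T s) :
    t₂ ∈ Torbit t₁ := by
  by_contra hne
  obtain ⟨V₁, V₂, hV₁, hV₂, hs₁, hs₂, hm₁, hm₂, hd⟩ := exists_tsymm_isOpen_separation hne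
  obtain ⟨a₁, ha₁, hne₁⟩ :=
    h₁.2 (V₁ ∩ L₁.hat) ⟨hm₁, h₁.1⟩ (hs₁.inter L₁.tsymm_hat) ⟨V₁, hV₁, rfl⟩
  obtain ⟨a₂, ha₂, hne₂⟩ :=
    h₂.2 (V₂ ∩ L₁.hat) ⟨hm₂, h₂.1⟩ (hs₂.inter L₁.tsymm_hat) ⟨V₂, hV₂, rfl⟩
  refine mul_ne_zero hne₁ hne₂ (hT a₁ a₂ (fun x => ?_) s)
  by_contra hx
  obtain ⟨hx₁, hx₂⟩ := mul_ne_zero_iff.1 hx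
  exact Set.disjoint_left.1 hd (not_not.1 (mt (ha₁ x) hx₁)).1 (not_not.1 (mt (ha₂ x) hx₂)).1

lemma OrthogonalityPreserving.suppDelta_eq_image_unboundedLocus
    (hT : OrthogonalityPreserving L₁ L₂ T) {s : L₂.carrier} (hs : s ∈ Ldisc T) :
    suppDelta T s = (↑) '' (Quotient.mk L₁.orbitSetoid ⁻¹' unboundedLocus T s) := by
  refine subset_antisymm (fun t ht => ?_)
    (image_subset_iff.2 fun t ht => mem_suppDelta_of_mem_unboundedLocus ht)
  obtain ⟨q, hq⟩ := unboundedLocus_nonempty hs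
  induction q using Quotient.inductionOn with | h t₀ => ?_
  have := hT.mem_Torbit_of_mem_suppDelta (mem_suppDelta_of_mem_unboundedLocus hq) ht
  rw [TBundle.Torbit_eq_image] at this
  obtain ⟨x, hx, rfl⟩ := this
  exact ⟨x, show Quotient.mk _ x ∈ _ from (mem_singleton_iff.1 hx) ▸ hq, rfl⟩

lemma OrthogonalityPreserving.iUnion_suppDelta_eq (hT : OrthogonalityPreserving L₁ L₂ T) :
    ⋃ s ∈ Ldisc T, suppDelta T s =
      (↑) '' (Quotient.mk L₁.orbitSetoid ⁻¹' ⋃ s ∈ Ldisc T, unboundedLocus T s) := by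
  simp_rw [preimage_iUnion₂, image_iUnion₂]
  exact iUnion₂_congr fun s hs => hT.suppDelta_eq_image_unboundedLocus hs

end Finiteness

section MainStatements

variable [IsTopologicalAddGroup E] [ContinuousSMul ℂ E] [T2Space E]
  [Module ℝ E] [IsScalarTower ℝ ℂ E] [LocallyConvexSpace ℝ E]
  [IsTopologicalAddGroup F] [ContinuousSMul ℂ F] [T2Space F]
  [Module ℝ F] [IsScalarTower ℝ ℂ F] [LocallyConvexSpace ℝ F]

/-- For a linear orthogonality preserving map
`T : C₀^𝕋(L₁) → C₀^𝕋(L₂)`, the union `⋃_{s ∈ L₂^d} supp(δ_s ∘ T)` is a finite disjoint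
union of `𝕋`-orbits `𝕋t₁ ∪ … ∪ 𝕋t_m` with `t₁, …, t_m ∈ L̂₁`. -/
theorem suppDelta_on_disc_finitely_many_orbits (L₁ : TBundle E) (L₂ : TBundle F)
    (T : L₁.C0T →ₗ[ℂ] L₂.C0T) (hT : OrthogonalityPreserving L₁ L₂ T) :
    ∃ (m : ℕ) (t : Fin m → E), (∀ i, t i ∈ L₁.hat) ∧
      (∀ i j, i ≠ j → Disjoint (Torbit (t i)) (Torbit (t j))) ∧
      (⋃ s ∈ Ldisc T, suppDelta T s) = ⋃ i, Torbit (t i) := by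
  obtain ⟨m, t, ht, hdisj, hunion⟩ := TBundle.exists_iUnion_Torbit_eq_of_finite
    (hT.finite_iUnion_unboundedLocus.subset (iUnion₂_subset fun s _ => subset_iUnion _ s))
  exact ⟨m, t, ht, hdisj, hT.iUnion_suppDelta_eq.trans hunion⟩

end MainStatements
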